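/- Let x, y ∈ S³₁,₊. If the closed Euclidean segment from p(x) to p(y) contains a point of the open unit ball of ℝ³, then the hyperbolic planes dual to x and y are disjoint: there is no z ∈ ℝ⁴ with ⟨z,z⟩ = −1, ⟨z,x⟩ = 0 and ⟨z,y⟩ = 0. -/

import Mathlib

noncomputable section

/-- The Minkowski bilinear form on `ℝ⁴`. -/
def mink (x y : Fin 4 → ℝ) : ℝ :=
  -(x 0 * y 0) + x 1 * y 1 + x 2 * y 2 + x 3 * y 3

/-- The projective (Klein) map `p(x) = (x₁, x₂, x₃)/x₀`. -/
def projMap (x : Fin 4 → ℝ) : EuclideanSpace ℝ (Fin 3) :=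
  WithLp.toLp 2 ![x 1 / x 0, x 2 / x 0, x 3 / x 0]

set_option maxHeartbeats 1000000 in
/-- If the closed segment from `p(x)` to `p(y)` (for `x, y ∈ S³₁,₊`) contains a
point of the open unit ball, then the hyperbolic planes dual to `x` and `y` are
disjoint. -/
theorem dual_planes_disjoint (x y : Fin 4 → ℝ)
    (hx : mink x x = 1) (hx0 : 0 < x 0)
    (hy : mink y y = 1) (hy0 : 0 < y 0)
    (hseg : ∃ ξ ∈ segment ℝ (projMap x) (projMap y), ‖ξ‖ < 1) :
    ¬ ∃ z : Fin 4 → ℝ, mink z z = -1 ∧ mink z x = 0 ∧ mink z y = 0 := by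
  rintro ⟨z, hz, hzx, hzy⟩
  obtain ⟨ξ, ⟨a, b, ha, hb, hab, hξ⟩, hξn⟩ := hseg
  have hx0' : x 0 ≠ 0 := ne_of_gt hx0
  have hy0' : y 0 ≠ 0 := ne_of_gt hy0
  -- components of ξ
  have hc : ∀ i : Fin 3, ξ i = a * projMap x i + b * projMap y i := by
    intro i
    rw [← hξ]
    rfl
  set A := a / x 0 with hA
  set B := b / y 0 with hB
  have h0 : A * x 0 + B * y 0 = 1 := by
    rw [hA, hB]; field_simp; linarith
  have h1 : ξ 0 = A * x 1 + B * y 1 := by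
    rw [hc 0, hA, hB]; simp [projMap]; field_simp
  have h2 : ξ 1 = A * x 2 + B * y 2 := by
    rw [hc 1, hA, hB]; simp [projMap]; field_simp
  have h3 : ξ 2 = A * x 3 + B * y 3 := by
    rw [hc 2, hA, hB]; simp [projMap]; field_simp
  -- norm of ξ
  have hnorm : (ξ 0)^2 + (ξ 1)^2 + (ξ 2)^2 < 1 := by
    have hsq : ‖ξ‖^2 = (ξ 0)^2 + (ξ 1)^2 + (ξ 2)^2 := by
      rw [EuclideanSpace.norm_eq, Real.sq_sqrt (by positivity)]
      simp [Fin.sum_univ_three, sq_abs]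
    nlinarith [norm_nonneg ξ]
  -- orthogonality of z to the lifted segment point
  have horth : z 0 = z 1 * (ξ 0) + z 2 * (ξ 1) + z 3 * (ξ 2) := by
    have h : A * mink z x + B * mink z y = 0 := by rw [hzx, hzy]; ring
    unfold mink at h
    rw [h1, h2, h3]
    linear_combination (-1) * h - z 0 * h0
  unfold mink at hz
  have hcs : (z 1 * ξ 0 + z 2 * ξ 1 + z 3 * ξ 2)^2 ≤
      ((ξ 0)^2 + (ξ 1)^2 + (ξ 2)^2) * ((z 1)^2 + (z 2)^2 + (z 3)^2) := by
    nlinarith [sq_nonneg (z 1 * ξ 1 - z 2 * ξ 0), sq_nonneg (z 1 * ξ 2 - z 3 * ξ 0),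
      sq_nonneg (z 2 * ξ 2 - z 3 * ξ 1)]
  have hT : (z 1)^2 + (z 2)^2 + (z 3)^2 = (z 0)^2 - 1 := by nlinarith [hz]
  rw [hT, ← horth] at hcs
  have hw1 : (1:ℝ) ≤ (z 0)^2 := by nlinarith [sq_nonneg (z 1), sq_nonneg (z 2), sq_nonneg (z 3)]
  have hS0 : (0:ℝ) ≤ (ξ 0)^2 + (ξ 1)^2 + (ξ 2)^2 := by positivity
  have h5 : ((ξ 0)^2 + (ξ 1)^2 + (ξ 2)^2) * ((z 0)^2 - 1) ≤ (z 0)^2 - 1 := by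
    have : (z 0)^2 - 1 ≥ 0 := by linarith
    nlinarith
  linarith
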